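/- Let S, P_A, P_B be unital complex algebras, let ω be a linear functional on S and σ_A, σ_B linear functionals on P_A, P_B with σ_A(1) = 1, and let Θ_A, Θ_B be unital algebra automorphisms of S⊗P_A and S⊗P_B. With Θ̂_A, Θ̂_B the extensions to S⊗P_A⊗P_B (Θ̂_A acting on factors one and two, Θ̂_B on factors one and three), ε_B(O) := (id_S⊗σ_B)(Θ_B(1⊗O)), and J_A(ω)(C) := (ω⊗σ_A)(Θ_A(C⊗1)), one has for every O_B ∈ P_B: (ω⊗σ_A⊗σ_B)((Θ̂_A ∘ Θ̂_B)(1⊗1⊗O_B)) = J_A(ω)(ε_B(O_B)). That is, when observer A's coupling precedes observer B's, B's expected outcome equals the expected value of B's induced observable in the non-selectively updated state J_A(ω). -/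

import Mathlib

/-!
`Θ̂_B` leaves the `P_A` factor of `1 ⊗ 1 ⊗ O_B` at `1`, so it produces `∑ᵢ sᵢ ⊗ 1 ⊗ pᵢ` with
`Θ_B (1 ⊗ O_B) = ∑ᵢ sᵢ ⊗ pᵢ`. Since `Θ̂_A` does not touch `P_B`, `σ_B` can be evaluated first,
leaving `J_A(ω)` applied to `∑ᵢ σ_B(pᵢ) sᵢ = ε_B(O_B)`.
-/

open scoped TensorProduct

noncomputable section

variable {S PA PB : Type*} [Ring S] [Algebra ℂ S]
  [Ring PA] [Algebra ℂ PA] [Ring PB] [Algebra ℂ PB]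

/-- The tensor product `ω ⊗ σ` of two linear functionals, determined by
`(ω ⊗ σ)(a ⊗ b) = ω a * σ b`. -/
def tensorFunctional {A B : Type*} [Ring A] [Algebra ℂ A]
    [Ring B] [Algebra ℂ B] (ω : A →ₗ[ℂ] ℂ) (σ : B →ₗ[ℂ] ℂ) :
    A ⊗[ℂ] B →ₗ[ℂ] ℂ :=
  (TensorProduct.lid ℂ ℂ).toLinearMap.comp (TensorProduct.map ω σ)

/-- The partial trace `id_S ⊗ σ : S ⊗ P →ₗ S`, determined by `a ⊗ b ↦ σ(b) • a`. -/
def idTensorFunctional (S : Type*) [Ring S] [Algebra ℂ S] {P : Type*}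
    [Ring P] [Algebra ℂ P] (σ : P →ₗ[ℂ] ℂ) : S ⊗[ℂ] P →ₗ[ℂ] S :=
  (TensorProduct.rid ℂ S).toLinearMap.comp (TensorProduct.map LinearMap.id σ)

/-- The rearrangement isomorphism `(S ⊗ P_A) ⊗ P_B ≃ (S ⊗ P_B) ⊗ P_A`
exchanging the two probe factors. -/
def probeSwap (S PA PB : Type*) [Ring S] [Algebra ℂ S]
    [Ring PA] [Algebra ℂ PA] [Ring PB] [Algebra ℂ PB] :
    ((S ⊗[ℂ] PA) ⊗[ℂ] PB) ≃ₐ[ℂ] ((S ⊗[ℂ] PB) ⊗[ℂ] PA) :=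
  (Algebra.TensorProduct.assoc ℂ ℂ ℂ S PA PB).trans
    ((Algebra.TensorProduct.congr AlgEquiv.refl
        (Algebra.TensorProduct.comm ℂ PA PB)).trans
      (Algebra.TensorProduct.assoc ℂ ℂ ℂ S PB PA).symm)

/-- The extension `Θ̂_A` of an automorphism `Θ_A` of `S ⊗ P_A` to
`(S ⊗ P_A) ⊗ P_B`, acting trivially on `P_B`. -/
def hatA (ΘA : (S ⊗[ℂ] PA) ≃ₐ[ℂ] (S ⊗[ℂ] PA)) :
    ((S ⊗[ℂ] PA) ⊗[ℂ] PB) ≃ₐ[ℂ] ((S ⊗[ℂ] PA) ⊗[ℂ] PB) :=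
  Algebra.TensorProduct.congr ΘA AlgEquiv.refl

/-- The extension `Θ̂_B` of an automorphism `Θ_B` of `S ⊗ P_B` to
`(S ⊗ P_A) ⊗ P_B`, acting on the first and third tensor factors and trivially
on `P_A`. -/
def hatB (ΘB : (S ⊗[ℂ] PB) ≃ₐ[ℂ] (S ⊗[ℂ] PB)) :
    ((S ⊗[ℂ] PA) ⊗[ℂ] PB) ≃ₐ[ℂ] ((S ⊗[ℂ] PA) ⊗[ℂ] PB) :=
  (probeSwap S PA PB).trans ((Algebra.TensorProduct.congr ΘB AlgEquiv.refl).trans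
    (probeSwap S PA PB).symm)

/-- The induced system observable `ε(O) = (id_S ⊗ σ)(Θ (1 ⊗ O))` of a probe
observable `O`. -/
def inducedObservable {P : Type*} [Ring P] [Algebra ℂ P] (σ : P →ₗ[ℂ] ℂ)
    (Θ : (S ⊗[ℂ] P) ≃ₐ[ℂ] (S ⊗[ℂ] P)) (O : P) : S :=
  idTensorFunctional S σ (Θ ((1 : S) ⊗ₜ[ℂ] O))

/-- The non-selective state-update map `J_A(ω) : C ↦ (ω ⊗ σ_A)(Θ_A (C ⊗ 1))`. -/
def updateMap {P : Type*} [Ring P] [Algebra ℂ P] (σ : P →ₗ[ℂ] ℂ)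
    (Θ : (S ⊗[ℂ] P) ≃ₐ[ℂ] (S ⊗[ℂ] P)) (ω : S →ₗ[ℂ] ℂ) : S →ₗ[ℂ] ℂ :=
  (tensorFunctional ω σ).comp (Θ.toLinearMap.comp ((TensorProduct.mk ℂ S P).flip (1 : P)))

@[simp]
theorem tensorFunctional_tmul {A B : Type*} [Ring A] [Algebra ℂ A] [Ring B] [Algebra ℂ B]
    (ω : A →ₗ[ℂ] ℂ) (σ : B →ₗ[ℂ] ℂ) (a : A) (b : B) :
    tensorFunctional ω σ (a ⊗ₜ b) = ω a * σ b := by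
  simp [tensorFunctional]

@[simp]
theorem idTensorFunctional_tmul {P : Type*} [Ring P] [Algebra ℂ P] (σ : P →ₗ[ℂ] ℂ)
    (s : S) (p : P) : idTensorFunctional S σ (s ⊗ₜ p) = σ p • s := by
  simp [idTensorFunctional]

theorem updateMap_apply {P : Type*} [Ring P] [Algebra ℂ P] (σ : P →ₗ[ℂ] ℂ)
    (Θ : (S ⊗[ℂ] P) ≃ₐ[ℂ] (S ⊗[ℂ] P)) (ω : S →ₗ[ℂ] ℂ) (s : S) :
    updateMap σ Θ ω s = tensorFunctional ω σ (Θ (s ⊗ₜ 1)) :=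
  rfl

@[simp]
theorem probeSwap_symm_tmul (s : S) (pa : PA) (pb : PB) :
    (probeSwap S PA PB).symm ((s ⊗ₜ pb) ⊗ₜ pa) = (s ⊗ₜ pa) ⊗ₜ pb := by
  simp [probeSwap]

@[simp]
theorem hatA_tmul (ΘA : (S ⊗[ℂ] PA) ≃ₐ[ℂ] (S ⊗[ℂ] PA)) (y : S ⊗[ℂ] PA) (pb : PB) :
    hatA ΘA (y ⊗ₜ pb) = ΘA y ⊗ₜ pb :=
  rfl

theorem hatB_tmul_one (ΘB : (S ⊗[ℂ] PB) ≃ₐ[ℂ] (S ⊗[ℂ] PB)) (s : S) (pb : PB) :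
    hatB (PA := PA) ΘB ((s ⊗ₜ 1) ⊗ₜ pb) = (probeSwap S PA PB).symm (ΘB (s ⊗ₜ pb) ⊗ₜ 1) := by
  simp [hatB, probeSwap, Algebra.TensorProduct.congr]

theorem tensorFunctional_hatA_probeSwap_symm (ω : S →ₗ[ℂ] ℂ) (σA : PA →ₗ[ℂ] ℂ)
    (σB : PB →ₗ[ℂ] ℂ) (ΘA : (S ⊗[ℂ] PA) ≃ₐ[ℂ] (S ⊗[ℂ] PA)) (x : S ⊗[ℂ] PB) :
    tensorFunctional (tensorFunctional ω σA) σB (hatA ΘA ((probeSwap S PA PB).symm (x ⊗ₜ 1)))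
      = updateMap σA ΘA ω (idTensorFunctional S σB x) := by
  induction x using TensorProduct.induction_on with
  | zero => simp
  | tmul s pb =>
    simp [updateMap_apply, mul_comm]
  | add x y hx hy => simp only [TensorProduct.add_tmul, map_add, hx, hy]

theorem ordered_measurement_expectation_eq_update_general
    (ω : S →ₗ[ℂ] ℂ) (σA : PA →ₗ[ℂ] ℂ) (σB : PB →ₗ[ℂ] ℂ)
    (ΘA : (S ⊗[ℂ] PA) ≃ₐ[ℂ] (S ⊗[ℂ] PA)) (ΘB : (S ⊗[ℂ] PB) ≃ₐ[ℂ] (S ⊗[ℂ] PB))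
    (OB : PB) :
    tensorFunctional (tensorFunctional ω σA) σB
      ((hatA ΘA) ((hatB ΘB) (((1 : S) ⊗ₜ[ℂ] (1 : PA)) ⊗ₜ[ℂ] OB)))
    = updateMap σA ΘA ω (inducedObservable σB ΘB OB) := by
  rw [hatB_tmul_one, tensorFunctional_hatA_probeSwap_symm, inducedObservable]

/-- When observer `A`'s coupling precedes observer `B`'s, `B`'s expected
outcome equals the expectation of `B`'s induced observable `ε_B(O_B)` in the
non-selectively updated state `J_A(ω)`:
`(ω ⊗ σ_A ⊗ σ_B)((Θ̂_A ∘ Θ̂_B)(1 ⊗ 1 ⊗ O_B)) = J_A(ω)(ε_B(O_B))`. -/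
theorem ordered_measurement_expectation_eq_update
    (ω : S →ₗ[ℂ] ℂ) (σA : PA →ₗ[ℂ] ℂ) (σB : PB →ₗ[ℂ] ℂ) (hσA : σA 1 = 1)
    (ΘA : (S ⊗[ℂ] PA) ≃ₐ[ℂ] (S ⊗[ℂ] PA)) (ΘB : (S ⊗[ℂ] PB) ≃ₐ[ℂ] (S ⊗[ℂ] PB))
    (OB : PB) :
    tensorFunctional (tensorFunctional ω σA) σB
      ((hatA ΘA) ((hatB ΘB) (((1 : S) ⊗ₜ[ℂ] (1 : PA)) ⊗ₜ[ℂ] OB)))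
    = updateMap σA ΘA ω (inducedObservable σB ΘB OB) :=
  ordered_measurement_expectation_eq_update_general ω σA σB ΘA ΘB OB

end
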